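/- arXiv:2605.04246 — 2 statements merged into one kernel-verified Lean document; each statement's English description precedes it below -/
import Mathlib

section
/- Let π₁, π₂ be finite nonnegative measures on ℝ^d with common mass c > 0 whose normalizations have means m₁, m₂ and positive definite covariances Σ₁, Σ₂. Then for every nonnegative coupling π on ℝ^d×ℝ^d with marginals π₁ and π₂, ∫∫ ‖x₂−x₁‖² dπ(x₁,x₂) ≥ c·(‖m₂−m₁‖² + tr(Σ₁ + Σ₂ − 2(Σ₁^{1/2} Σ₂ Σ₁^{1/2})^{1/2})). -/
/-!
Center both marginals and let `T` be the cross-moment matrix `∫ (x₁ - m₁)(x₂ - m₂)ᵀ dπ`.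
Expanding the square, `∫ ‖x₂ - x₁‖² dπ = c ‖m₂ - m₁‖² + c tr Σ₁ + c tr Σ₂ - 2 tr T`, so it
suffices to show `tr T ≤ c tr G`. The joint second-moment matrix `[[c Σ₁, T], [Tᵀ, c Σ₂]]` is
a Gram matrix in `L²(π)`, hence positive semidefinite, and pairing it in trace with the
positive semidefinite matrix `[[X, -1], [-1, X⁻¹]]`, `X = R⁻¹ G R⁻¹`, gives
`c tr(Σ₁ X) - 2 tr T + c tr(Σ₂ X⁻¹) ≥ 0`, where both traces equal `tr G`.
-/

open MeasureTheory Matrix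

namespace Matrix

variable {m n : Type*} [Fintype m] [Fintype n]

lemma trace_fromBlocks {R : Type*} [AddCommMonoid R] (A : Matrix m m R) (B : Matrix m n R)
    (C : Matrix n m R) (D : Matrix n n R) : (fromBlocks A B C D).trace = A.trace + D.trace := by
  simp [trace, Fintype.sum_sum_type]

open scoped MatrixOrder ComplexOrder in
lemma PosSemidef.trace_mul_nonneg [DecidableEq n] {𝕜 : Type*} [RCLike 𝕜] {A B : Matrix n n 𝕜}
    (hA : A.PosSemidef) (hB : B.PosSemidef) : 0 ≤ (A * B).trace := by
  obtain ⟨L, rfl⟩ := CStarAlgebra.nonneg_iff_eq_star_mul_self.mp hB.nonneg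
  rw [star_eq_conjTranspose, ← Matrix.mul_assoc, trace_mul_comm]
  simpa [Matrix.mul_assoc] using (hA.mul_mul_conjTranspose_same L).trace_nonneg

theorem trace_le_trace_of_posSemidef_fromBlocks [DecidableEq n] {A B C R G : Matrix n n ℝ}
    (hA : A.PosDef) (hB : B.PosDef) (hR : R.IsHermitian) (hRR : R * R = A)
    (hG : G.PosSemidef) (hGG : G * G = R * B * R)
    (hM : (fromBlocks A C Cᵀ B).PosSemidef) : C.trace ≤ G.trace := by
  have hRu : IsUnit R := isUnit_of_mul_isUnit_left (hRR ▸ hA.isUnit)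
  have hGu : IsUnit G := isUnit_of_mul_isUnit_left (hGG ▸ (hRu.mul hB.isUnit).mul hRu)
  have hRd := (isUnit_iff_isUnit_det R).1 hRu
  have hGd := (isUnit_iff_isUnit_det G).1 hGu
  set X := R⁻¹ * G * R⁻¹ with hXdef
  have hX : X.PosDef := by
    have := (hG.posDef_iff_isUnit.2 hGu).conjTranspose_mul_mul_same
      (mulVec_injective_iff_isUnit.2 (isUnit_nonsing_inv_iff.2 hRu))
    rwa [hR.inv.eq] at this
  have hXinv : X⁻¹ = R * G⁻¹ * R := by
    rw [hXdef, Matrix.mul_inv_rev, Matrix.mul_inv_rev, nonsing_inv_nonsing_inv _ hRd,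
      Matrix.mul_assoc]
  let := hX.isUnit.invertible
  -- The Schur complement `X⁻¹ - (-1) * X⁻¹ * (-1)` vanishes.
  have hN : (fromBlocks X (-1) (-1) X⁻¹).PosSemidef := by
    simpa using (PosDef.fromBlocks₁₁ (-1) X⁻¹ hX).2 (by simpa using PosSemidef.zero)
  have hAX : (A * X).trace = G.trace := by
    rw [← hRR, hXdef, Matrix.mul_assoc R, Matrix.mul_assoc R⁻¹,
      mul_nonsing_inv_cancel_left _ _ hRd, trace_mul_comm, nonsing_inv_mul_cancel_right _ _ hRd]
  have hBX : (B * X⁻¹).trace = G.trace := by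
    rw [hXinv, trace_mul_comm, Matrix.mul_assoc R, Matrix.mul_assoc R, trace_mul_comm R,
      Matrix.mul_assoc, Matrix.mul_assoc, ← Matrix.mul_assoc R, ← hGG,
      nonsing_inv_mul_cancel_left _ _ hGd]
  have hpair := hM.trace_mul_nonneg hN
  rw [fromBlocks_multiply, trace_fromBlocks, trace_add, trace_add, hAX, hBX] at hpair
  simp only [mul_neg, mul_one, trace_neg, trace_transpose] at hpair
  linarith

end Matrix

section MomentMatrix

variable {α ι κ : Type*} [MeasurableSpace α] {μ : Measure α}

noncomputable def momentMatrix (μ : Measure α) (f : ι → α → ℝ) (g : κ → α → ℝ) : Matrix ι κ ℝ :=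
  Matrix.of fun i j => ∫ x, f i x * g j x ∂μ

lemma momentMatrix_transpose (f : ι → α → ℝ) (g : κ → α → ℝ) :
    (momentMatrix μ f g)ᵀ = momentMatrix μ g f := by
  ext i j
  simp [momentMatrix, mul_comm]

lemma momentMatrix_sumElim (f : ι → α → ℝ) (g : κ → α → ℝ) :
    momentMatrix μ (Sum.elim f g) (Sum.elim f g) =
      fromBlocks (momentMatrix μ f f) (momentMatrix μ f g)
        (momentMatrix μ g f) (momentMatrix μ g g) := by
  ext (i | i) (j | j) <;> rfl

lemma posSemidef_momentMatrix [Fintype ι] {f : ι → α → ℝ} (hf : ∀ i, MemLp (f i) 2 μ) :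
    (momentMatrix μ f f).PosSemidef := by
  have : momentMatrix μ f f = gram ℝ fun i => (hf i).toLp (f i) := by
    ext i j
    rw [gram_apply, L2.inner_def, momentMatrix, of_apply]
    refine integral_congr_ae ?_
    filter_upwards [(hf i).coeFn_toLp, (hf j).coeFn_toLp] with x hi hj
    simp [hi, hj, mul_comm]
  exact this ▸ posSemidef_gram ℝ _

lemma momentMatrix_map {β : Type*} [MeasurableSpace β] {φ : α → β} (hφ : AEMeasurable φ μ)
    {f : ι → β → ℝ} {g : κ → β → ℝ} (hf : ∀ i, Measurable (f i)) (hg : ∀ j, Measurable (g j)) :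
    momentMatrix (μ.map φ) f g = momentMatrix μ (fun i x => f i (φ x)) (fun j x => g j (φ x)) := by
  ext i j
  exact integral_map hφ ((hf i).mul (hg j)).aestronglyMeasurable

end MomentMatrix

section RandomVectors

variable {α ι : Type*} [MeasurableSpace α] {μ : Measure α}

def centered (X : α → ι → ℝ) (m : ι → ℝ) : ι → α → ℝ := fun i x => X x i - m i

lemma memLp_apply_of_integrable_sq_map {X : α → ι → ℝ} (hX : Measurable X) {i : ι}
    (hsq : Integrable (fun x => x i ^ 2) (μ.map X)) : MemLp (fun x => X x i) 2 μ :=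
  ((memLp_two_iff_integrable_sq (measurable_pi_apply i).aestronglyMeasurable).2 hsq).comp_of_map
    hX.aemeasurable

lemma integral_centered_eq_zero [IsFiniteMeasure μ] {X : α → ι → ℝ} (hX : Measurable X) {i : ι}
    (hsq : Integrable (fun x => x i ^ 2) (μ.map X)) {m : ι → ℝ}
    (hmean : ∫ x, x i ∂(μ.map X) = μ.real Set.univ * m i) :
    ∫ x, centered X m i x ∂μ = 0 := by
  rw [integral_map hX.aemeasurable (measurable_pi_apply i).aestronglyMeasurable] at hmean
  show ∫ x, (X x i - m i) ∂μ = 0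
  rw [integral_sub ((memLp_apply_of_integrable_sq_map hX hsq).integrable one_le_two)
    (integrable_const _), hmean, integral_const, smul_eq_mul, sub_self]

lemma integral_sub_add_const_sq [IsFiniteMeasure μ] {f g : α → ℝ} (hf : MemLp f 2 μ)
    (hg : MemLp g 2 μ) (k : ℝ) :
    ∫ x, (g x - f x + k) ^ 2 ∂μ = ∫ x, f x * f x ∂μ + ∫ x, g x * g x ∂μ
      - 2 * ∫ x, f x * g x ∂μ + 2 * k * (∫ x, g x ∂μ - ∫ x, f x ∂μ) + k ^ 2 * μ.real Set.univ := by
  have hff : Integrable (fun x => f x * f x) μ := hf.integrable_mul hf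
  have hgg : Integrable (fun x => g x * g x) μ := hg.integrable_mul hg
  have hfg : Integrable (fun x => f x * g x) μ := hf.integrable_mul hg
  have hf1 := hf.integrable one_le_two
  have hg1 := hg.integrable one_le_two
  have : ∀ x, (g x - f x + k) ^ 2 = f x * f x + g x * g x - 2 * (f x * g x)
      + (2 * k * g x - 2 * k * f x) + k ^ 2 := fun x => by ring
  simp_rw [this]
  rw [integral_add (by fun_prop) (by fun_prop), integral_add (by fun_prop) (by fun_prop),
    integral_sub (by fun_prop) (by fun_prop), integral_add hff hgg,
    integral_sub (by fun_prop) (by fun_prop), integral_const_mul, integral_const_mul,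
    integral_const_mul, integral_const, smul_eq_mul]
  ring

lemma lintegral_sum_sq_sub_eq [Fintype ι] [IsFiniteMeasure μ] {X Y : α → ι → ℝ} {m₁ m₂ : ι → ℝ}
    (hX : ∀ i, MemLp (centered X m₁ i) 2 μ) (hY : ∀ i, MemLp (centered Y m₂ i) 2 μ)
    (hX0 : ∀ i, ∫ x, centered X m₁ i x ∂μ = 0) (hY0 : ∀ i, ∫ x, centered Y m₂ i x ∂μ = 0) :
    ∫⁻ x, ENNReal.ofReal (∑ i, (Y x i - X x i) ^ 2) ∂μ =
      ENNReal.ofReal (μ.real Set.univ * ∑ i, (m₂ i - m₁ i) ^ 2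
        + (momentMatrix μ (centered X m₁) (centered X m₁)).trace
        + (momentMatrix μ (centered Y m₂) (centered Y m₂)).trace
        - 2 * (momentMatrix μ (centered X m₁) (centered Y m₂)).trace) := by
  have hsq : ∀ i, (fun x => (Y x i - X x i) ^ 2)
      = fun x => (centered Y m₂ i x - centered X m₁ i x + (m₂ i - m₁ i)) ^ 2 := by
    intro i; ext x; simp only [centered]; ring
  have hint : ∀ i, Integrable (fun x => (Y x i - X x i) ^ 2) μ := fun i => by
    rw [hsq]; exact (((hY i).sub (hX i)).add (memLp_const _)).integrable_sq
  rw [← ofReal_integral_eq_lintegral_ofReal (integrable_finsetSum _ fun i _ => hint i)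
    (.of_forall fun x => by positivity), integral_finsetSum _ fun i _ => hint i]
  congr 1
  simp only [hsq, integral_sub_add_const_sq (hX _) (hY _), hX0, hY0, trace, diag, momentMatrix,
    of_apply, Finset.sum_add_distrib, Finset.sum_sub_distrib, Finset.mul_sum, Finset.sum_mul,
    sub_self, mul_zero, add_zero, mul_comm (μ.real Set.univ)]
  ring

theorem trace_momentMatrix_le [Fintype ι] [DecidableEq ι] {X Y : α → ι → ℝ} {m₁ m₂ : ι → ℝ}
    (hX : ∀ i, MemLp (centered X m₁ i) 2 μ) (hY : ∀ i, MemLp (centered Y m₂ i) 2 μ)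
    {c : ℝ} (hc : 0 < c) {A B R G : Matrix ι ι ℝ}
    (hXX : momentMatrix μ (centered X m₁) (centered X m₁) = c • A)
    (hYY : momentMatrix μ (centered Y m₂) (centered Y m₂) = c • B)
    (hA : A.PosDef) (hB : B.PosDef) (hR : R.IsHermitian) (hRR : R * R = A)
    (hG : G.PosSemidef) (hGG : G * G = R * B * R) :
    (momentMatrix μ (centered X m₁) (centered Y m₂)).trace ≤ c * G.trace := by
  have hM := (posSemidef_momentMatrix (f := Sum.elim (centered X m₁) (centered Y m₂))
    (Sum.rec hX hY)).smul (inv_nonneg.2 hc.le)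
  rw [momentMatrix_sumElim, hXX, hYY, ← momentMatrix_transpose (centered X m₁), fromBlocks_smul,
    smul_smul, smul_smul, inv_mul_cancel₀ hc.ne', one_smul, one_smul, ← transpose_smul] at hM
  have := trace_le_trace_of_posSemidef_fromBlocks hA hB hR hRR hG hGG hM
  rwa [trace_smul, smul_eq_mul, inv_mul_le_iff₀ hc] at this

end RandomVectors

theorem gelbrich_lower_bound_general {d : ℕ}
    (pi1 pi2 : Measure (Fin d → ℝ))
    (cpl : Measure ((Fin d → ℝ) × (Fin d → ℝ)))
    (c : ℝ) (hc : 0 < c)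
    (m1 m2 : Fin d → ℝ) (S1 S2 : Matrix (Fin d) (Fin d) ℝ)
    (hS1 : S1.PosDef) (hS2 : S2.PosDef)
    (hmass1 : pi1 Set.univ = ENNReal.ofReal c)
    (hsq1 : ∀ i, Integrable (fun x : Fin d → ℝ => (x i) ^ 2) pi1)
    (hsq2 : ∀ i, Integrable (fun x : Fin d → ℝ => (x i) ^ 2) pi2)
    (hmean1 : ∀ i, ∫ x, x i ∂pi1 = c * m1 i)
    (hmean2 : ∀ i, ∫ x, x i ∂pi2 = c * m2 i)
    (hcov1 : ∀ i j, ∫ x, (x i - m1 i) * (x j - m1 j) ∂pi1 = c * S1 i j)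
    (hcov2 : ∀ i j, ∫ x, (x i - m2 i) * (x j - m2 j) ∂pi2 = c * S2 i j)
    (hmarg1 : cpl.map Prod.fst = pi1)
    (hmarg2 : cpl.map Prod.snd = pi2)
    (R G : Matrix (Fin d) (Fin d) ℝ)
    (hR : R.PosSemidef) (hRR : R * R = S1)
    (hG : G.PosSemidef) (hGG : G * G = R * S2 * R) :
    ENNReal.ofReal
        (c * ((∑ i, (m2 i - m1 i) ^ 2) + (S1 + S2 - (2 : ℝ) • G).trace))
      ≤ ∫⁻ z, ENNReal.ofReal (∑ i, (z.2 i - z.1 i) ^ 2) ∂cpl := by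
  subst hmarg1 hmarg2
  have hcpl : cpl Set.univ = ENNReal.ofReal c := by
    rwa [Measure.map_apply measurable_fst MeasurableSet.univ, Set.preimage_univ] at hmass1
  have : IsFiniteMeasure cpl := ⟨hcpl ▸ ENNReal.ofReal_lt_top⟩
  have hmass : cpl.real Set.univ = c := by rw [measureReal_def, hcpl, ENNReal.toReal_ofReal hc.le]
  have hX i : MemLp (centered Prod.fst m1 i) 2 cpl :=
    (memLp_apply_of_integrable_sq_map measurable_fst (hsq1 i)).sub (memLp_const _)
  have hY i : MemLp (centered Prod.snd m2 i) 2 cpl :=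
    (memLp_apply_of_integrable_sq_map measurable_snd (hsq2 i)).sub (memLp_const _)
  have hmeas (m : Fin d → ℝ) (i : Fin d) : Measurable fun x : Fin d → ℝ => x i - m i := by
    fun_prop
  have hXX : momentMatrix cpl (centered Prod.fst m1) (centered Prod.fst m1) = c • S1 :=
    (momentMatrix_map measurable_fst.aemeasurable (hmeas m1) (hmeas m1)).symm.trans
      (ext hcov1)
  have hYY : momentMatrix cpl (centered Prod.snd m2) (centered Prod.snd m2) = c • S2 :=
    (momentMatrix_map measurable_snd.aemeasurable (hmeas m2) (hmeas m2)).symm.trans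
      (ext hcov2)
  have hT := trace_momentMatrix_le hX hY hc hXX hYY hS1 hS2 hR.1 hRR hG hGG
  rw [lintegral_sum_sq_sub_eq hX hY
    (fun i => integral_centered_eq_zero measurable_fst (hsq1 i) (by rw [hmean1, hmass]))
    (fun i => integral_centered_eq_zero measurable_snd (hsq2 i) (by rw [hmean2, hmass])),
    hXX, hYY, hmass]
  refine ENNReal.ofReal_le_ofReal ?_
  simp only [trace_sub, trace_add, trace_smul, smul_eq_mul]
  linarith

/-- Gelbrich lower bound: for finite nonnegative measures `π₁, π₂` of common mass `c > 0`
whose normalizations have means `m₁, m₂` and positive definite covariances `Σ₁, Σ₂`, every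
coupling `π` with marginals `π₁, π₂` satisfies
`∫∫ ‖x₂−x₁‖² dπ ≥ c (‖m₂−m₁‖² + tr(Σ₁ + Σ₂ − 2(Σ₁^{1/2} Σ₂ Σ₁^{1/2})^{1/2}))`.
Here `R` is the square root of `Σ₁` and `G` that of `Σ₁^{1/2} Σ₂ Σ₁^{1/2}`. -/
theorem gelbrich_lower_bound {d : ℕ}
    (pi1 pi2 : Measure (Fin d → ℝ)) [IsFiniteMeasure pi1] [IsFiniteMeasure pi2]
    (cpl : Measure ((Fin d → ℝ) × (Fin d → ℝ)))
    (c : ℝ) (hc : 0 < c)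
    (m1 m2 : Fin d → ℝ) (S1 S2 : Matrix (Fin d) (Fin d) ℝ)
    (hS1 : S1.PosDef) (hS2 : S2.PosDef)
    (hmass1 : pi1 Set.univ = ENNReal.ofReal c)
    (hmass2 : pi2 Set.univ = ENNReal.ofReal c)
    (hsq1 : ∀ i, Integrable (fun x : Fin d → ℝ => (x i) ^ 2) pi1)
    (hsq2 : ∀ i, Integrable (fun x : Fin d → ℝ => (x i) ^ 2) pi2)
    (hmean1 : ∀ i, ∫ x, x i ∂pi1 = c * m1 i)
    (hmean2 : ∀ i, ∫ x, x i ∂pi2 = c * m2 i)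
    (hcov1 : ∀ i j, ∫ x, (x i - m1 i) * (x j - m1 j) ∂pi1 = c * S1 i j)
    (hcov2 : ∀ i j, ∫ x, (x i - m2 i) * (x j - m2 j) ∂pi2 = c * S2 i j)
    (hmarg1 : cpl.map Prod.fst = pi1)
    (hmarg2 : cpl.map Prod.snd = pi2)
    (R G : Matrix (Fin d) (Fin d) ℝ)
    (hR : R.PosSemidef) (hRR : R * R = S1)
    (hG : G.PosSemidef) (hGG : G * G = R * S2 * R) :
    ENNReal.ofReal
        (c * ((∑ i, (m2 i - m1 i) ^ 2) + (S1 + S2 - (2 : ℝ) • G).trace))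
      ≤ ∫⁻ z, ENNReal.ofReal (∑ i, (z.2 i - z.1 i) ^ 2) ∂cpl :=
  gelbrich_lower_bound_general pi1 pi2 cpl c hc m1 m2 S1 S2 hS1 hS2 hmass1 hsq1 hsq2 hmean1 hmean2
    hcov1 hcov2 hmarg1 hmarg2 R G hR hRR hG hGG
end

section
/- Let Σ₁ ≻ 0 and Σ₂ ≻ 0 be d×d matrices, m₁, m₂ ∈ ℝ^d, and define the affine map T(x) = Σ₁^{-1/2}(Σ₁^{1/2}Σ₂Σ₁^{1/2})^{1/2}Σ₁^{-1/2}·x + (m₂ − Σ₁^{-1/2}(Σ₁^{1/2}Σ₂Σ₁^{1/2})^{1/2}Σ₁^{-1/2}·m₁). Then the pushforward of the Gaussian N(m₁,Σ₁) under T is N(m₂,Σ₂). -/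
/-! An invertible affine map `x ↦ A x + b` carries `N(m, S)` to `N(A m + b, A S Aᵀ)`: in the
change of variables the Jacobian `|det A|⁻¹` is absorbed by `√det (A S Aᵀ) = |det A| √det S`,
and the quadratic form is preserved. For `A = R⁻¹ G R⁻¹`, which is symmetric,
`A Σ₁ A = R⁻¹ G² R⁻¹ = R⁻¹ (R Σ₂ R) R⁻¹ = Σ₂`. -/

open MeasureTheory Matrix Real

/-- Density of the Gaussian `N(m, S)` on `ℝ^d` (for `S ≻ 0`). -/
noncomputable def gaussPdf {d : ℕ} (m : Fin d → ℝ) (S : Matrix (Fin d) (Fin d) ℝ)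
    (x : Fin d → ℝ) : ℝ :=
  (Real.sqrt ((2 * π) ^ d * S.det))⁻¹ *
    Real.exp (-(1 / 2) * ((x - m) ⬝ᵥ S⁻¹.mulVec (x - m)))

/-- The Gaussian probability measure `N(m, S)` on `ℝ^d`. -/
noncomputable def gaussMeasure {d : ℕ} (m : Fin d → ℝ) (S : Matrix (Fin d) (Fin d) ℝ) :
    Measure (Fin d → ℝ) :=
  volume.withDensity fun x => ENNReal.ofReal (gaussPdf m S x)

theorem MeasurableEquiv.map_withDensity {α β : Type*} [MeasurableSpace α] [MeasurableSpace β]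
    (e : α ≃ᵐ β) (μ : Measure α) {f : α → ENNReal} (hf : Measurable f) :
    (μ.withDensity f).map e = (μ.map e).withDensity (f ∘ e.symm) := by
  ext s hs
  rw [e.map_apply, withDensity_apply _ hs, withDensity_apply _ (e.measurable hs),
    setLIntegral_map hs (hf.comp e.symm.measurable) e.measurable]
  simp

namespace Matrix

variable {ι : Type*} [Fintype ι] [DecidableEq ι]

noncomputable def affineMeasurableEquiv (A : Matrix ι ι ℝ) (hA : IsUnit A.det) (b : ι → ℝ) :
    (ι → ℝ) ≃ᵐ (ι → ℝ) where
  toFun x := A *ᵥ x + b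
  invFun y := A⁻¹ *ᵥ (y - b)
  left_inv x := by simp [mulVec_mulVec, nonsing_inv_mul _ hA]
  right_inv y := by simp [mulVec_mulVec, mul_nonsing_inv _ hA]
  measurable_toFun := by
    change Measurable fun x => A *ᵥ x + b
    fun_prop
  measurable_invFun := by
    change Measurable fun y => A⁻¹ *ᵥ (y - b)
    fun_prop

@[simp]
theorem coe_affineMeasurableEquiv (A : Matrix ι ι ℝ) (hA : IsUnit A.det) (b : ι → ℝ) :
    ⇑(affineMeasurableEquiv A hA b) = fun x => A *ᵥ x + b :=
  rfl

theorem map_mulVec_add_volume (A : Matrix ι ι ℝ) (hA : A.det ≠ 0) (b : ι → ℝ) :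
    Measure.map (fun x => A *ᵥ x + b) volume = ENNReal.ofReal |A.det⁻¹| • volume := by
  have hlin : Measurable (toLin' A) := (toLin' A).continuous_of_finiteDimensional.measurable
  rw [show (fun x => A *ᵥ x + b) = (· + b) ∘ toLin' A from rfl,
    ← Measure.map_map (measurable_add_const b) hlin,
    Real.map_matrix_volume_pi_eq_smul_volume_pi hA, Measure.map_smul, map_add_right_eq_self]

theorem mulVec_dotProduct_inv_conj_mulVec (A S : Matrix ι ι ℝ) (hA : IsUnit A.det) (v : ι → ℝ) :
    A *ᵥ v ⬝ᵥ (A * S * Aᵀ)⁻¹ *ᵥ A *ᵥ v = v ⬝ᵥ S⁻¹ *ᵥ v := by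
  calc A *ᵥ v ⬝ᵥ (A * S * Aᵀ)⁻¹ *ᵥ A *ᵥ v
      = v ᵥ* Aᵀ ⬝ᵥ (Aᵀ⁻¹ * S⁻¹ * A⁻¹ * A) *ᵥ v := by
        rw [vecMul_transpose, mulVec_mulVec, mul_inv_rev, mul_inv_rev]
        simp only [Matrix.mul_assoc]
    _ = v ⬝ᵥ (Aᵀ * Aᵀ⁻¹ * S⁻¹ * (A⁻¹ * A)) *ᵥ v := by
        rw [← dotProduct_mulVec, mulVec_mulVec]
        simp only [Matrix.mul_assoc]
    _ = v ⬝ᵥ S⁻¹ *ᵥ v := by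
        rw [mul_nonsing_inv _ (isUnit_det_transpose _ hA), nonsing_inv_mul _ hA,
          Matrix.one_mul, Matrix.mul_one]

theorem inv_mul_mul_inv_conj_eq_of_mul_self_eq {R G S : Matrix ι ι ℝ} (hR : IsUnit R.det)
    (hRT : R.IsSymm) (hGT : G.IsSymm) (hGG : G * G = R * S * R) :
    R⁻¹ * G * R⁻¹ * (R * R) * (R⁻¹ * G * R⁻¹)ᵀ = S := by
  rw [transpose_mul, transpose_mul, transpose_nonsing_inv, hRT.eq, hGT.eq]
  calc _ = R⁻¹ * G * (R⁻¹ * R) * (R * R⁻¹) * G * R⁻¹ := by simp only [Matrix.mul_assoc]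
    _ = R⁻¹ * (G * G) * R⁻¹ := by
        rw [nonsing_inv_mul _ hR, mul_nonsing_inv _ hR]
        simp only [Matrix.mul_one, Matrix.mul_assoc]
    _ = (R⁻¹ * R) * S * (R * R⁻¹) := by
        rw [hGG]
        simp only [Matrix.mul_assoc]
    _ = S := by rw [nonsing_inv_mul _ hR, mul_nonsing_inv _ hR, Matrix.one_mul, Matrix.mul_one]

end Matrix

theorem continuous_gaussPdf {d : ℕ} (m : Fin d → ℝ) (S : Matrix (Fin d) (Fin d) ℝ) :
    Continuous (gaussPdf m S) := by
  unfold gaussPdf; fun_prop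

theorem gaussPdf_mulVec_add {d : ℕ} (A S : Matrix (Fin d) (Fin d) ℝ) (hA : IsUnit A.det)
    (m b x : Fin d → ℝ) :
    gaussPdf (A *ᵥ m + b) (A * S * Aᵀ) (A *ᵥ x + b) = |A.det|⁻¹ * gaussPdf m S x := by
  have hdiff : A *ᵥ x + b - (A *ᵥ m + b) = A *ᵥ (x - m) := by
    rw [mulVec_sub]; abel
  have hsqrt : √((2 * π) ^ d * (A * S * Aᵀ).det) = |A.det| * √((2 * π) ^ d * S.det) := by
    rw [det_mul, det_mul, det_transpose, ← sqrt_sq_eq_abs, ← sqrt_mul (sq_nonneg _)]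
    ring_nf
  rw [gaussPdf, gaussPdf, hdiff, mulVec_dotProduct_inv_conj_mulVec A S hA, hsqrt, mul_inv,
    mul_assoc]

theorem gaussMeasure_map_mulVec_add {d : ℕ} (A S : Matrix (Fin d) (Fin d) ℝ)
    (hA : IsUnit A.det) (m b : Fin d → ℝ) :
    (gaussMeasure m S).map (fun x => A *ᵥ x + b) = gaussMeasure (A *ᵥ m + b) (A * S * Aᵀ) := by
  set e := affineMeasurableEquiv A hA b
  have hpdf : Measurable fun x => ENNReal.ofReal (gaussPdf m S x) :=
    (continuous_gaussPdf m S).measurable.ennreal_ofReal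
  rw [gaussMeasure, ← coe_affineMeasurableEquiv A hA b, e.map_withDensity _ hpdf,
    coe_affineMeasurableEquiv, map_mulVec_add_volume A hA.ne_zero,
    withDensity_smul_measure, ← withDensity_smul' _ _ ENNReal.ofReal_ne_top, gaussMeasure]
  congr 1
  funext y
  obtain ⟨x, rfl⟩ := e.surjective y
  simp only [Pi.smul_apply, Function.comp_apply, e.symm_apply_apply, smul_eq_mul]
  rw [← ENNReal.ofReal_mul (abs_nonneg _), abs_inv, coe_affineMeasurableEquiv,
    gaussPdf_mulVec_add A S hA]

/-- Here `R` is the symmetric positive definite square root of `Σ₁` and `G` that of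
`Σ₁^{1/2} Σ₂ Σ₁^{1/2}`, so that `T = R⁻¹ G R⁻¹`. -/
theorem gaussian_pushforward_affine_general {d : ℕ}
    (m1 m2 : Fin d → ℝ) (S1 S2 : Matrix (Fin d) (Fin d) ℝ)
    (R G : Matrix (Fin d) (Fin d) ℝ)
    (hR : R.PosDef) (hRR : R * R = S1)
    (hG : G.PosDef) (hGG : G * G = R * S2 * R) :
    Measure.map
        (fun x => (R⁻¹ * G * R⁻¹).mulVec x + (m2 - (R⁻¹ * G * R⁻¹).mulVec m1))
        (gaussMeasure m1 S1)
      = gaussMeasure m2 S2 := by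
  have hRdet : IsUnit R.det := (isUnit_iff_isUnit_det R).mp hR.isUnit
  have hTdet : IsUnit (R⁻¹ * G * R⁻¹).det := by
    rw [← isUnit_iff_isUnit_det]
    exact ((isUnit_nonsing_inv_iff.mpr hR.isUnit).mul hG.isUnit).mul
      (isUnit_nonsing_inv_iff.mpr hR.isUnit)
  rw [gaussMeasure_map_mulVec_add _ _ hTdet, add_sub_cancel, ← hRR,
    inv_mul_mul_inv_conj_eq_of_mul_self_eq hRdet (isHermitian_iff_isSymm.mp hR.isHermitian)
    (isHermitian_iff_isSymm.mp hG.isHermitian) hGG]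

/-- The pushforward of `N(m₁,Σ₁)` under the affine map
`T x + (m₂ − T m₁)` with `T = Σ₁^{-1/2}(Σ₁^{1/2}Σ₂Σ₁^{1/2})^{1/2}Σ₁^{-1/2}` is `N(m₂,Σ₂)`.
Here `R` is the symmetric positive definite square root of `Σ₁` and `G` that of
`Σ₁^{1/2} Σ₂ Σ₁^{1/2}`, so that `T = R⁻¹ G R⁻¹`. -/
theorem gaussian_pushforward_affine {d : ℕ}
    (m1 m2 : Fin d → ℝ) (S1 S2 : Matrix (Fin d) (Fin d) ℝ)
    (hS1 : S1.PosDef) (hS2 : S2.PosDef)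
    (R G : Matrix (Fin d) (Fin d) ℝ)
    (hR : R.PosDef) (hRR : R * R = S1)
    (hG : G.PosDef) (hGG : G * G = R * S2 * R) :
    Measure.map
        (fun x => (R⁻¹ * G * R⁻¹).mulVec x + (m2 - (R⁻¹ * G * R⁻¹).mulVec m1))
        (gaussMeasure m1 S1)
      = gaussMeasure m2 S2 :=
  gaussian_pushforward_affine_general m1 m2 S1 S2 R G hR hRR hG hGG
end
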